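/- Let α ∈ (0,1). Then C(α-1) = 0, i.e. ∫_0^{+∞} t^{-1-2α} ( χ_{(0,1)}(t)(1-t)^{α-1} + (1+t)^{α-1} - 2 ) dt = 0. -/

import Mathlib

/-!
Let `F(t) = (2α)⁻¹ t^(-2α) (2 - (1-t)₊^α - (1+t)^α)`. Away from `t = 1`, `F' = f + r`, where
`f` is the integrand and `r(t) = ½ t^(-2α) ((1+t)^(α-1) - (1-t)₊^(α-1))`. Since `F → 0` at
`+∞`, `∫_ε^∞ f = -F(ε) - ∫_ε^∞ r`. The substitution `u = t/(1+t)` turns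
`∫_ε^∞ t^(-2α) (1+t)^(α-1) dt` into `∫_{ε/(1+ε)}^1 u^(-2α) (1-u)^(α-1) du`, so `∫_ε^∞ r` is
half the integral of `u^(-2α) (1-u)^(α-1)` over `[ε/(1+ε), ε]`, an interval of length `≤ ε²`;
it is `O(ε^(2-2α))`. Since `(1-t)^α + (1+t)^α - 2 = O(t²)`, also `F(ε) = O(ε^(2-2α))`, and
`ε → 0` gives `∫_0^∞ f = 0`.
-/

open MeasureTheory Set Filter Topology

lemma abs_rpow_sub_rpow_le_of_mem_Icc (p : ℝ) {a b x y : ℝ} (ha : 0 < a)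
    (hx : x ∈ Icc a b) (hy : y ∈ Icc a b) :
    |x ^ p - y ^ p| ≤ |p| * (a ^ (p - 1) + b ^ (p - 1)) * |x - y| := by
  have hderiv : ∀ z ∈ Icc a b, HasDerivWithinAt (· ^ p) (p * z ^ (p - 1)) (Icc a b) z :=
    fun z hz => (Real.hasDerivAt_rpow_const (Or.inl (ha.trans_le hz.1).ne')).hasDerivWithinAt
  have hbound : ∀ z ∈ Icc a b, ‖p * z ^ (p - 1)‖ ≤ |p| * (a ^ (p - 1) + b ^ (p - 1)) := by
    intro z hz
    have hz0 : 0 < z := ha.trans_le hz.1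
    have hmono : z ^ (p - 1) ≤ a ^ (p - 1) + b ^ (p - 1) := by
      rcases le_total 0 (p - 1) with hp | hp
      · linarith [Real.rpow_le_rpow hz0.le hz.2 hp, Real.rpow_nonneg ha.le (p - 1)]
      · linarith [Real.rpow_le_rpow_of_nonpos ha hz.1 hp,
          Real.rpow_nonneg (ha.le.trans (hz.1.trans hz.2)) (p - 1)]
    rw [norm_mul, Real.norm_eq_abs, Real.norm_eq_abs, abs_of_pos (Real.rpow_pos_of_pos hz0 _)]
    exact mul_le_mul_of_nonneg_left hmono (abs_nonneg p)
  simpa only [Real.norm_eq_abs] using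
    (convex_Icc a b).norm_image_sub_le_of_norm_hasDerivWithin_le hderiv hbound hy hx

lemma exists_abs_one_sub_rpow_add_one_add_rpow_sub_two_le (c : ℝ) :
    ∃ K, ∀ t ∈ Ioc (0 : ℝ) (1 / 2), |(1 - t) ^ c + (1 + t) ^ c - 2| ≤ K * t ^ 2 := by
  set L := |c - 1| * ((1 / 2 : ℝ) ^ (c - 2) + (3 / 2 : ℝ) ^ (c - 2))
  refine ⟨2 * |c| * L, fun t ht => ?_⟩
  have hderiv : ∀ s ∈ Icc 0 t, HasDerivWithinAt (fun s => (1 - s) ^ c + (1 + s) ^ c)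
      (c * ((1 + s) ^ (c - 1) - (1 - s) ^ (c - 1))) (Icc 0 t) s := by
    intro s hs
    have h1 : (1 : ℝ) - s ≠ 0 := by linarith [hs.2, ht.2]
    have h2 : (1 : ℝ) + s ≠ 0 := by linarith [hs.1]
    have := (((hasDerivAt_id s).const_sub 1).rpow_const (p := c) (Or.inl h1)).add
      (((hasDerivAt_id s).const_add 1).rpow_const (p := c) (Or.inl h2))
    exact (this.congr_deriv (by simp only [id]; ring)).hasDerivWithinAt
  have hbound : ∀ s ∈ Ico 0 t,
      ‖c * ((1 + s) ^ (c - 1) - (1 - s) ^ (c - 1))‖ ≤ |c| * (L * (2 * t)) := by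
    intro s hs
    have key := abs_rpow_sub_rpow_le_of_mem_Icc (c - 1) (a := 1 / 2) (b := 3 / 2) (by norm_num)
      (x := 1 + s) (y := 1 - s) ⟨by linarith [hs.1], by linarith [hs.2, ht.2]⟩
      ⟨by linarith [hs.2, ht.2], by linarith [hs.1]⟩
    rw [show (1 + s) - (1 - s) = 2 * s by ring,
      abs_of_nonneg (by linarith [hs.1] : (0 : ℝ) ≤ 2 * s),
      show c - 1 - 1 = c - 2 by ring] at key
    rw [norm_mul, Real.norm_eq_abs, Real.norm_eq_abs]
    refine mul_le_mul_of_nonneg_left (key.trans ?_) (abs_nonneg c)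
    exact mul_le_mul_of_nonneg_left (by linarith [hs.2]) (by positivity)
  have hmvt := norm_image_sub_le_of_norm_deriv_le_segment' hderiv hbound t (right_mem_Icc.2 ht.1.le)
  rw [sub_zero, add_zero, Real.one_rpow, one_add_one_eq_two, Real.norm_eq_abs] at hmvt
  exact hmvt.trans_eq (by ring)

lemma tendsto_nhdsGT_zero_of_norm_le_rpow {f : ℝ → ℝ} {C p : ℝ} (hp : 0 < p)
    (h : ∀ᶠ x in 𝓝[>] 0, ‖f x‖ ≤ C * x ^ p) : Tendsto f (𝓝[>] 0) (𝓝 0) := by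
  refine squeeze_zero_norm' h ?_
  have := ((Real.continuous_rpow_const hp.le).tendsto' 0 0 (Real.zero_rpow hp.ne')).const_mul C
  rw [mul_zero] at this
  exact this.mono_left nhdsWithin_le_nhds

lemma posPart_one_sub_rpow_of_one_le {b t : ℝ} (hb : b ≠ 0) (ht : 1 ≤ t) :
    (1 - t)⁺ ^ b = 0 := by
  rw [posPart_of_nonpos (by linarith), Real.zero_rpow hb]

lemma indicator_Ioo_one_sub_rpow {b t : ℝ} (hb : b ≠ 0) (ht : 0 < t) :
    (Ioo 0 1).indicator (fun s => (1 - s) ^ b) t = (1 - t)⁺ ^ b := by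
  by_cases h : t < 1
  · rw [indicator_of_mem (show t ∈ Ioo 0 1 from ⟨ht, h⟩), posPart_of_nonneg (by linarith)]
  · rw [indicator_of_notMem (fun hm => h hm.2), posPart_one_sub_rpow_of_one_le hb (not_lt.1 h)]

lemma hasDerivAt_posPart_one_sub_rpow {p t : ℝ} (hp0 : p ≠ 0) (hp1 : p ≠ 1) (ht : t ≠ 1) :
    HasDerivAt (fun s => (1 - s)⁺ ^ p) (-(p * (1 - t)⁺ ^ (p - 1))) t := by
  rcases ht.lt_or_gt with ht | ht
  · have hlin : HasDerivAt (fun s => (1 - s) ^ p) (-1 * p * (1 - t) ^ (p - 1)) t :=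
      ((hasDerivAt_id t).const_sub 1).rpow_const (Or.inl (by simp; linarith))
    refine (hlin.congr_of_eventuallyEq ?_).congr_deriv ?_
    · filter_upwards [Iio_mem_nhds ht] with s hs
      rw [posPart_of_nonneg (by linarith [hs.out])]
    · rw [posPart_of_nonneg (by linarith)]; ring
  · have hzero : (fun s => (1 - s)⁺ ^ p) =ᶠ[𝓝 t] fun _ => 0 := by
      filter_upwards [Ioi_mem_nhds ht] with s hs
      exact posPart_one_sub_rpow_of_one_le hp0 hs.out.le
    rw [posPart_one_sub_rpow_of_one_le (sub_ne_zero.2 hp1) ht.le, mul_zero, neg_zero]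
    exact (hasDerivAt_const t 0).congr_of_eventuallyEq hzero

lemma integrableOn_rpow_mul_one_sub_rpow_Ioc (a : ℝ) {b δ : ℝ} (hb : -1 < b) (hδ : 0 < δ) :
    IntegrableOn (fun u : ℝ => u ^ a * (1 - u) ^ b) (Ioc δ 1) := by
  rcases le_or_gt 1 δ with h1δ | hδ1
  · simp [Ioc_eq_empty_of_le h1δ]
  have hsing : IntegrableOn (fun u : ℝ => (1 - u) ^ b) (Icc δ 1) := by
    have := (intervalIntegral.intervalIntegrable_rpow' (a := 0) (b := 1 - δ) hb).comp_sub_left 1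
    rw [sub_zero, sub_sub_cancel] at this
    exact (intervalIntegrable_iff_integrableOn_Icc_of_le hδ1.le).1 this.symm
  refine (hsing.continuousOn_mul (fun u hu => ?_) isCompact_Icc).mono_set Ioc_subset_Icc_self
  exact (Real.continuousAt_rpow_const u a (Or.inl (hδ.trans_le hu.1).ne')).continuousWithinAt

lemma integrableOn_rpow_mul_posPart_one_sub_rpow_Ioi (a : ℝ) {b δ : ℝ} (hb : -1 < b)
    (hb0 : b ≠ 0) (hδ : 0 < δ) :
    IntegrableOn (fun t : ℝ => t ^ a * (1 - t)⁺ ^ b) (Ioi δ) := by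
  refine ((integrableOn_rpow_mul_one_sub_rpow_Ioc a hb hδ).congr_fun (fun t ht => ?_)
    measurableSet_Ioc).of_forall_sdiff_eq_zero measurableSet_Ioi (fun t ht => ?_)
  · rw [posPart_of_nonneg (by linarith [ht.2])]
  · rw [posPart_one_sub_rpow_of_one_le hb0 (not_le.1 fun h => ht.2 ⟨ht.1, h⟩).le, mul_zero]

lemma setIntegral_Ioi_rpow_mul_posPart_one_sub_rpow (a : ℝ) {b : ℝ} (hb0 : b ≠ 0) (δ : ℝ) :
    ∫ t in Ioi δ, t ^ a * (1 - t)⁺ ^ b = ∫ t in Ioc δ 1, t ^ a * (1 - t) ^ b := by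
  rw [setIntegral_eq_of_subset_of_forall_sdiff_eq_zero measurableSet_Ioi Ioc_subset_Ioi_self
    (fun t ht => by
      rw [posPart_one_sub_rpow_of_one_le hb0 (not_le.1 fun h => ht.2 ⟨ht.1, h⟩).le, mul_zero])]
  exact setIntegral_congr_fun measurableSet_Ioc fun t ht => by
    rw [posPart_of_nonneg (by linarith [ht.2])]

lemma integrableOn_rpow_mul_one_add_rpow_Ioi {a b ε : ℝ} (hab : a + b < -1) (hb : b ≤ 0)
    (hε : 0 < ε) : IntegrableOn (fun t : ℝ => t ^ a * (1 + t) ^ b) (Ioi ε) := by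
  refine (integrableOn_Ioi_rpow_of_lt hab hε).mono' (by fun_prop)
    (ae_restrict_of_forall_mem measurableSet_Ioi fun t ht => ?_)
  have ht0 : 0 < t := hε.trans ht.out
  have hmono : (1 + t) ^ b ≤ t ^ b := Real.rpow_le_rpow_of_nonpos ht0 (by linarith) hb
  rw [norm_mul, Real.norm_of_nonneg (by positivity), Real.norm_of_nonneg (by positivity),
    Real.rpow_add ht0]
  exact mul_le_mul_of_nonneg_left hmono (by positivity)

lemma image_div_one_add_Ioi {ε : ℝ} (hε : 0 ≤ ε) :
    (fun t : ℝ => t / (1 + t)) '' Ioi ε = Ioo (ε / (1 + ε)) 1 := by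
  ext u
  simp only [mem_image, mem_Ioi, mem_Ioo]
  constructor
  · rintro ⟨t, ht, rfl⟩
    have h1t : 0 < 1 + t := by linarith
    refine ⟨?_, (div_lt_one h1t).2 (by linarith)⟩
    rw [div_lt_div_iff₀ (by linarith) h1t]
    nlinarith
  · rintro ⟨hεu, hu1⟩
    have h1u : 0 < 1 - u := by linarith
    rw [div_lt_iff₀ (by linarith)] at hεu
    refine ⟨u / (1 - u), ?_, ?_⟩
    · rw [lt_div_iff₀ h1u]; nlinarith
    · field_simp; ring

lemma integral_Ioi_rpow_mul_one_add_rpow (a b : ℝ) {ε : ℝ} (hε : 0 ≤ ε) :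
    ∫ t in Ioi ε, t ^ a * (1 + t) ^ b =
      ∫ u in Ioo (ε / (1 + ε)) 1, u ^ a * (1 - u) ^ (-a - b - 2) := by
  have hderiv : ∀ t ∈ Ioi ε, HasDerivWithinAt (fun t : ℝ => t / (1 + t))
      ((1 * (1 + t) - t * 1) / (1 + t) ^ 2) (Ioi ε) t := fun t ht =>
    ((hasDerivAt_id t).div ((hasDerivAt_id t).const_add 1)
      (by rw [id]; linarith [ht.out])).hasDerivWithinAt
  have hinj : InjOn (fun t : ℝ => t / (1 + t)) (Ioi ε) := by
    intro s hs t ht hst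
    rw [div_eq_div_iff (by linarith [hs.out]) (by linarith [ht.out])] at hst
    linarith
  rw [← image_div_one_add_Ioi hε, integral_image_eq_integral_abs_deriv_smul measurableSet_Ioi
    hderiv hinj]
  refine setIntegral_congr_fun measurableSet_Ioi fun t ht => ?_
  have ht0 : 0 < t := hε.trans_lt ht
  have h1t : 0 < 1 + t := by linarith
  have hjac : (1 * (1 + t) - t * 1) / (1 + t) ^ 2 = (1 + t) ^ (-2 : ℝ) := by
    rw [Real.rpow_neg h1t.le, Real.rpow_two]; field_simp; ring
  have hleft : (t / (1 + t)) ^ a = t ^ a * (1 + t) ^ (-a) := by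
    rw [Real.div_rpow ht0.le h1t.le, Real.rpow_neg h1t.le, div_eq_mul_inv]
  have hright : (1 - t / (1 + t)) ^ (-a - b - 2) = (1 + t) ^ (a + b + 2) := by
    rw [show 1 - t / (1 + t) = (1 + t)⁻¹ by field_simp; ring, Real.inv_rpow h1t.le,
      ← Real.rpow_neg h1t.le]
    ring_nf
  have hsum : (1 + t) ^ (-2 : ℝ) * (1 + t) ^ (-a) * (1 + t) ^ (a + b + 2) = (1 + t) ^ b := by
    rw [← Real.rpow_add h1t, ← Real.rpow_add h1t]; ring_nf
  rw [hjac, hleft, hright, abs_of_pos (Real.rpow_pos_of_pos h1t _), smul_eq_mul, ← hsum]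
  ring

/-- As `0 ^ p = 0` for `p ≠ 0`, the term `(1 - t)⁺ ^ (α - 1)` vanishes for `t ≥ 1`, like the
indicator `χ_(0,1)(t) (1 - t) ^ (α - 1)` it stands for. -/
noncomputable def powKernel (α t : ℝ) : ℝ :=
  t ^ (-1 - 2 * α) * ((1 - t)⁺ ^ (α - 1) + (1 + t) ^ (α - 1) - 2)

noncomputable def powKernelPrimitive (α t : ℝ) : ℝ :=
  (2 * α)⁻¹ * t ^ (-(2 * α)) * (2 - (1 - t)⁺ ^ α - (1 + t) ^ α)

noncomputable def powKernelDefect (α t : ℝ) : ℝ :=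
  2⁻¹ * (t ^ (-(2 * α)) * (1 + t) ^ (α - 1) - t ^ (-(2 * α)) * (1 - t)⁺ ^ (α - 1))

section

variable {α : ℝ}

lemma hasDerivAt_powKernelPrimitive (hα : α ∈ Ioo 0 1) {t : ℝ} (ht : 0 < t) (ht1 : t ≠ 1) :
    HasDerivAt (powKernelPrimitive α) (powKernel α t + powKernelDefect α t) t := by
  have hα0 : α ≠ 0 := hα.1.ne'
  have hα1 : α - 1 ≠ 0 := sub_ne_zero.2 hα.2.ne
  have h1t : 0 < 1 + t := by linarith
  have hfactor := (Real.hasDerivAt_rpow_const (p := -(2 * α)) (Or.inl ht.ne')).const_mul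
    (2 * α)⁻¹
  have hbracket :=
    ((hasDerivAt_const t 2).sub (hasDerivAt_posPart_one_sub_rpow hα0 hα.2.ne ht1)).sub
      (((hasDerivAt_id t).const_add 1).rpow_const (p := α) (Or.inl h1t.ne'))
  refine (hfactor.mul hbracket).congr_deriv ?_
  have hP : (1 - t)⁺ ^ (α - 1) * (1 - t)⁺ = (1 - t)⁺ ^ (α - 1) * (1 - t) := by
    rcases ht1.lt_or_gt with h | h
    · rw [posPart_of_nonneg (by linarith)]
    · rw [posPart_one_sub_rpow_of_one_le hα1 h.le, zero_mul, zero_mul]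
  have hPα : (1 - t)⁺ ^ α = (1 - t)⁺ ^ (α - 1) * (1 - t)⁺ := by
    rw [← Real.rpow_add_one' (posPart_nonneg _) (by simpa using hα0)]; ring_nf
  have hQα : (1 + t) ^ α = (1 + t) ^ (α - 1) * (1 + t) := by
    rw [← Real.rpow_add_one h1t.ne']; ring_nf
  have hT : t ^ (-(2 * α)) = t ^ (-1 - 2 * α) * t := by
    rw [← Real.rpow_add_one ht.ne']; ring_nf
  have hT' : t ^ (-(2 * α) - 1) = t ^ (-1 - 2 * α) := by ring_nf
  simp only [Pi.sub_apply, id, powKernel, powKernelDefect, hPα, hQα, hT, hT']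
  field_simp
  linear_combination 2 * α * hP

lemma continuousOn_powKernelPrimitive (hα : 0 < α) :
    ContinuousOn (powKernelPrimitive α) (Ioi 0) := by
  have hcont : Continuous fun t : ℝ => 2 - (1 - t)⁺ ^ α - (1 + t) ^ α := by
    have : Continuous fun t : ℝ => (1 - t)⁺ := by fun_prop
    exact (continuous_const.sub (this.rpow_const fun _ => Or.inr hα.le)).sub
      ((continuous_const.add continuous_id).rpow_const fun _ => Or.inr hα.le)
  exact (continuousOn_const.mul (continuousOn_id.rpow_const fun t ht => Or.inl (ne_of_gt ht))).mul
    hcont.continuousOn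

lemma tendsto_powKernelPrimitive_atTop (hα : 0 < α) :
    Tendsto (powKernelPrimitive α) atTop (𝓝 0) := by
  have hlim := (tendsto_rpow_neg_atTop hα).const_mul ((2 * α)⁻¹ * (2 * 2 ^ α))
  rw [mul_zero] at hlim
  refine squeeze_zero_norm' ?_ hlim
  filter_upwards [eventually_ge_atTop 1] with M hM
  have hM0 : 0 < M := one_pos.trans_le hM
  have hpow : 1 ≤ (1 + M) ^ α := Real.one_le_rpow (by linarith) hα.le
  have hgrowth : (1 + M) ^ α ≤ 2 ^ α * M ^ α := by
    rw [← Real.mul_rpow zero_le_two hM0.le]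
    exact Real.rpow_le_rpow (by linarith) (by linarith) hα.le
  have hdecay : M ^ (-(2 * α)) * M ^ α = M ^ (-α) := by
    rw [← Real.rpow_add hM0]; ring_nf
  rw [powKernelPrimitive, posPart_one_sub_rpow_of_one_le hα.ne' hM, norm_mul, norm_mul,
    Real.norm_of_nonneg (by positivity), Real.norm_of_nonneg (by positivity), ← hdecay,
    Real.norm_eq_abs, sub_zero]
  have habs : |2 - (1 + M) ^ α| ≤ 2 * (2 ^ α * M ^ α) := by
    rw [abs_le]; constructor <;> linarith
  calc (2 * α)⁻¹ * M ^ (-(2 * α)) * |2 - (1 + M) ^ α|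
      ≤ (2 * α)⁻¹ * M ^ (-(2 * α)) * (2 * (2 ^ α * M ^ α)) := by gcongr
    _ = (2 * α)⁻¹ * (2 * 2 ^ α) * (M ^ (-(2 * α)) * M ^ α) := by ring

lemma tendsto_powKernelPrimitive_nhdsGT_zero (hα : α ∈ Ioo 0 1) :
    Tendsto (powKernelPrimitive α) (𝓝[>] 0) (𝓝 0) := by
  obtain ⟨K, hK⟩ := exists_abs_one_sub_rpow_add_one_add_rpow_sub_two_le α
  refine tendsto_nhdsGT_zero_of_norm_le_rpow (C := (2 * α)⁻¹ * K) (p := 2 - 2 * α)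
    (by linarith [hα.2]) ?_
  filter_upwards [Ioc_mem_nhdsGT (by norm_num : (0 : ℝ) < 1 / 2)] with ε hε
  have hε0 : 0 < ε := hε.1
  have hα0 : 0 < α := hα.1
  have hpow : ε ^ (-(2 * α)) * ε ^ 2 = ε ^ (2 - 2 * α) := by
    rw [← Real.rpow_two, ← Real.rpow_add hε0]; ring_nf
  rw [powKernelPrimitive, posPart_of_nonneg (by linarith [hε.2]), norm_mul, norm_mul,
    Real.norm_of_nonneg (by positivity), Real.norm_of_nonneg (by positivity), ← hpow,
    Real.norm_eq_abs,
    show 2 - (1 - ε) ^ α - (1 + ε) ^ α = -((1 - ε) ^ α + (1 + ε) ^ α - 2) by ring, abs_neg]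
  calc (2 * α)⁻¹ * ε ^ (-(2 * α)) * |(1 - ε) ^ α + (1 + ε) ^ α - 2|
      ≤ (2 * α)⁻¹ * ε ^ (-(2 * α)) * (K * ε ^ 2) :=
        mul_le_mul_of_nonneg_left (hK ε hε) (by positivity)
    _ = (2 * α)⁻¹ * K * (ε ^ (-(2 * α)) * ε ^ 2) := by ring

lemma integrableOn_powKernel_Ioc (hα : α ∈ Ioo 0 1) :
    IntegrableOn (powKernel α) (Ioc 0 (1 / 2)) := by
  have hα0 := hα.1
  obtain ⟨K, hK⟩ := exists_abs_one_sub_rpow_add_one_add_rpow_sub_two_le (α - 1)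
  have hdom : IntegrableOn (fun t : ℝ => K * t ^ (1 - 2 * α)) (Ioc 0 (1 / 2)) :=
    ((intervalIntegrable_iff_integrableOn_Ioc_of_le (by norm_num)).1
      (intervalIntegral.intervalIntegrable_rpow' (by linarith [hα.2]))).const_mul K
  refine hdom.mono' (by unfold powKernel; fun_prop)
    (ae_restrict_of_forall_mem measurableSet_Ioc fun t ht => ?_)
  have ht0 : 0 < t := ht.1
  have hpow : t ^ (-1 - 2 * α) * t ^ 2 = t ^ (1 - 2 * α) := by
    rw [← Real.rpow_two, ← Real.rpow_add ht0]; ring_nf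
  rw [powKernel, posPart_of_nonneg (by linarith [ht.2]), norm_mul,
    Real.norm_of_nonneg (by positivity), Real.norm_eq_abs, ← hpow]
  calc t ^ (-1 - 2 * α) * |(1 - t) ^ (α - 1) + (1 + t) ^ (α - 1) - 2|
      ≤ t ^ (-1 - 2 * α) * (K * t ^ 2) :=
        mul_le_mul_of_nonneg_left (hK t ht) (by positivity)
    _ = K * (t ^ (-1 - 2 * α) * t ^ 2) := by ring

lemma integrableOn_powKernel_Ioi (hα : α ∈ Ioo 0 1) :
    IntegrableOn (powKernel α) (Ioi (1 / 2)) := by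
  have hα0 := hα.1
  have hα1 := hα.2
  have hsing := integrableOn_rpow_mul_posPart_one_sub_rpow_Ioi (-1 - 2 * α) (b := α - 1)
    (by linarith) (by linarith) (by norm_num : (0 : ℝ) < 1 / 2)
  have hregular : IntegrableOn (fun t : ℝ => t ^ (-1 - 2 * α) * ((1 + t) ^ (α - 1) - 2))
      (Ioi (1 / 2)) := by
    refine ((integrableOn_Ioi_rpow_of_lt (by linarith : -1 - 2 * α < -1)
      (by norm_num : (0 : ℝ) < 1 / 2)).const_mul 2).mono'
      (by fun_prop) (ae_restrict_of_forall_mem measurableSet_Ioi fun t ht => ?_)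
    have ht0 : (0 : ℝ) < t := lt_trans (by norm_num) ht.out
    have hpow0 : 0 < (1 + t) ^ (α - 1) := by positivity
    have hpow1 : (1 + t) ^ (α - 1) ≤ 1 :=
      Real.rpow_le_one_of_one_le_of_nonpos (by linarith) (by linarith)
    have habs : |(1 + t) ^ (α - 1) - 2| ≤ 2 := by rw [abs_le]; constructor <;> linarith
    rw [norm_mul, Real.norm_of_nonneg (by positivity), Real.norm_eq_abs]
    exact (mul_le_mul_of_nonneg_left habs (by positivity)).trans_eq (mul_comm _ _)
  exact (hsing.add hregular).congr_fun (fun t _ => by simp only [powKernel, Pi.add_apply]; ring)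
    measurableSet_Ioi

lemma integrableOn_powKernel (hα : α ∈ Ioo 0 1) : IntegrableOn (powKernel α) (Ioi 0) := by
  rw [← Ioc_union_Ioi_eq_Ioi (by norm_num : (0 : ℝ) ≤ 1 / 2)]
  exact (integrableOn_powKernel_Ioc hα).union (integrableOn_powKernel_Ioi hα)

lemma integrableOn_powKernelDefect (hα : α ∈ Ioo 0 1) {ε : ℝ} (hε : 0 < ε) :
    IntegrableOn (powKernelDefect α) (Ioi ε) := by
  have hα0 := hα.1
  have hα1 := hα.2
  have hminus := integrableOn_rpow_mul_posPart_one_sub_rpow_Ioi (-(2 * α)) (b := α - 1)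
    (by linarith) (by linarith) hε
  have hplus := integrableOn_rpow_mul_one_add_rpow_Ioi (a := -(2 * α)) (b := α - 1)
    (by linarith) (by linarith) hε
  exact (hplus.sub hminus).const_mul 2⁻¹

lemma setIntegral_powKernelDefect (hα : α ∈ Ioo 0 1) {ε : ℝ} (hε : 0 < ε) (hε1 : ε < 1) :
    ∫ t in Ioi ε, powKernelDefect α t =
      2⁻¹ * ∫ u in ε / (1 + ε)..ε, u ^ (-(2 * α)) * (1 - u) ^ (α - 1) := by
  have hα0 := hα.1
  have hα1 := hα.2
  have hc0 : 0 < ε / (1 + ε) := by positivity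
  have hcε : ε / (1 + ε) ≤ ε := div_le_self hε.le (by linarith)
  have hq := integrableOn_rpow_mul_one_sub_rpow_Ioc (-(2 * α)) (b := α - 1) (by linarith) hc0
  have hq₁ : IntervalIntegrable (fun u : ℝ => u ^ (-(2 * α)) * (1 - u) ^ (α - 1)) volume
      (ε / (1 + ε)) ε :=
    (intervalIntegrable_iff_integrableOn_Ioc_of_le hcε).2
      (hq.mono_set (Ioc_subset_Ioc_right hε1.le))
  have hq₂ : IntervalIntegrable (fun u : ℝ => u ^ (-(2 * α)) * (1 - u) ^ (α - 1)) volume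
      ε 1 :=
    (intervalIntegrable_iff_integrableOn_Ioc_of_le hε1.le).2
      (hq.mono_set (Ioc_subset_Ioc_left hcε))
  have hplus : ∫ t in Ioi ε, t ^ (-(2 * α)) * (1 + t) ^ (α - 1) =
      ∫ u in ε / (1 + ε)..1, u ^ (-(2 * α)) * (1 - u) ^ (α - 1) := by
    rw [integral_Ioi_rpow_mul_one_add_rpow _ _ hε.le,
      show -(-(2 * α)) - (α - 1) - 2 = α - 1 by ring,
      intervalIntegral.integral_of_le (hcε.trans hε1.le), integral_Ioc_eq_integral_Ioo]
  have hminus : ∫ t in Ioi ε, t ^ (-(2 * α)) * (1 - t)⁺ ^ (α - 1) =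
      ∫ u in ε..1, u ^ (-(2 * α)) * (1 - u) ^ (α - 1) := by
    rw [setIntegral_Ioi_rpow_mul_posPart_one_sub_rpow _ (by linarith) ε,
      intervalIntegral.integral_of_le hε1.le]
  unfold powKernelDefect
  rw [integral_const_mul,
    integral_sub (integrableOn_rpow_mul_one_add_rpow_Ioi (by linarith) (by linarith) hε)
      (integrableOn_rpow_mul_posPart_one_sub_rpow_Ioi _ (by linarith) (by linarith) hε),
    hplus, hminus, ← intervalIntegral.integral_add_adjacent_intervals hq₁ hq₂,
    add_sub_cancel_right]

lemma setIntegral_Ioi_powKernel (hα : α ∈ Ioo 0 1) {ε : ℝ} (hε : 0 < ε) (hε1 : ε < 1) :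
    ∫ t in Ioi ε, powKernel α t =
      -powKernelPrimitive α ε - ∫ t in Ioi ε, powKernelDefect α t := by
  have hf := (integrableOn_powKernel hα).mono_set (Ioi_subset_Ioi hε.le)
  have hr := integrableOn_powKernelDefect hα hε
  have hint : IntegrableOn (fun t => powKernel α t + powKernelDefect α t) (Ioi ε) := hf.add hr
  have hint₁ : IntegrableOn (fun t => powKernel α t + powKernelDefect α t) (Ioi 1) :=
    hint.mono_set (Ioi_subset_Ioi hε1.le)
  have hcont := continuousOn_powKernelPrimitive hα.1
  have hsum :
      ∫ t in Ioi ε, (powKernel α t + powKernelDefect α t) = -powKernelPrimitive α ε := by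
    rw [← intervalIntegral.integral_interval_add_Ioi hint hint₁,
      intervalIntegral.integral_eq_sub_of_hasDerivAt_of_le hε1.le
        (hcont.mono fun t ht => hε.trans_le ht.1)
        (fun t ht => hasDerivAt_powKernelPrimitive hα (hε.trans ht.1) ht.2.ne)
        ((intervalIntegrable_iff_integrableOn_Ioc_of_le hε1.le).2
          (hint.mono_set Ioc_subset_Ioi_self)),
      integral_Ioi_of_hasDerivAt_of_tendsto
        (hcont.continuousAt (Ioi_mem_nhds one_pos)).continuousWithinAt
        (fun t ht => hasDerivAt_powKernelPrimitive hα (one_pos.trans ht) ht.out.ne') hint₁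
        (tendsto_powKernelPrimitive_atTop hα.1)]
    ring
  rw [← hsum, integral_add hf hr]
  ring

lemma tendsto_setIntegral_powKernelDefect_nhdsGT_zero (hα : α ∈ Ioo 0 1) :
    Tendsto (fun ε => ∫ t in Ioi ε, powKernelDefect α t) (𝓝[>] 0) (𝓝 0) := by
  have hα0 := hα.1
  have hα1 := hα.2
  refine tendsto_nhdsGT_zero_of_norm_le_rpow (C := 2 ^ (2 * α)) (p := 2 - 2 * α)
    (by linarith) ?_
  filter_upwards [Ioo_mem_nhdsGT (by norm_num : (0 : ℝ) < 1 / 2)] with ε hε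
  have hε0 : 0 < ε := hε.1
  have hcε : ε / (1 + ε) ≤ ε := div_le_self hε0.le (by linarith)
  have hbound : ∀ u ∈ uIoc (ε / (1 + ε)) ε,
      ‖u ^ (-(2 * α)) * (1 - u) ^ (α - 1)‖ ≤ (ε / 2) ^ (-(2 * α)) * 2 := by
    intro u hu
    rw [uIoc_of_le hcε] at hu
    have hu0 : ε / 2 ≤ u :=
      (div_le_div_of_nonneg_left hε0.le (by linarith) (by linarith [hε.2])).trans hu.1.le
    have hu0' : 0 < u := lt_of_lt_of_le (by positivity) hu0
    have hleft : u ^ (-(2 * α)) ≤ (ε / 2) ^ (-(2 * α)) :=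
      Real.rpow_le_rpow_of_nonpos (by positivity) hu0 (by linarith)
    have hright : (1 - u) ^ (α - 1) ≤ 2 := by
      calc (1 - u) ^ (α - 1) ≤ (1 / 2) ^ (α - 1) :=
            Real.rpow_le_rpow_of_nonpos (by norm_num) (by linarith [hu.2, hε.2]) (by linarith)
        _ ≤ (1 / 2) ^ (-1 : ℝ) :=
            Real.rpow_le_rpow_of_exponent_ge (by norm_num) (by norm_num) (by linarith)
        _ = 2 := by norm_num
    have hright0 : 0 ≤ (1 - u) ^ (α - 1) := Real.rpow_nonneg (by linarith [hu.2, hε.2]) _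
    rw [norm_mul, Real.norm_of_nonneg (by positivity), Real.norm_of_nonneg hright0]
    exact mul_le_mul hleft hright hright0 (by positivity)
  have hlength : |ε - ε / (1 + ε)| ≤ ε ^ 2 := by
    rw [abs_of_nonneg (by linarith),
      show ε - ε / (1 + ε) = ε ^ 2 / (1 + ε) by field_simp; ring]
    exact div_le_self (by positivity) (by linarith)
  have hpow : (ε / 2) ^ (-(2 * α)) * ε ^ 2 = 2 ^ (2 * α) * ε ^ (2 - 2 * α) := by
    rw [Real.div_rpow hε0.le zero_le_two, Real.rpow_neg zero_le_two, div_inv_eq_mul,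
      ← Real.rpow_two, show 2 - 2 * α = -(2 * α) + 2 by ring, Real.rpow_add hε0]
    ring
  rw [setIntegral_powKernelDefect hα hε0 (by linarith [hε.2]), norm_mul,
    Real.norm_of_nonneg (by norm_num), ← hpow]
  calc 2⁻¹ * ‖∫ u in ε / (1 + ε)..ε, u ^ (-(2 * α)) * (1 - u) ^ (α - 1)‖
      ≤ 2⁻¹ * ((ε / 2) ^ (-(2 * α)) * 2 * |ε - ε / (1 + ε)|) :=
        mul_le_mul_of_nonneg_left (intervalIntegral.norm_integral_le_of_norm_le_const hbound)
          (by norm_num)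
    _ ≤ 2⁻¹ * ((ε / 2) ^ (-(2 * α)) * 2 * ε ^ 2) := by gcongr
    _ = (ε / 2) ^ (-(2 * α)) * ε ^ 2 := by ring

end

/-- For `α ∈ (0,1)`, `C(α-1) = 0`. -/
theorem stmt_1 (α : ℝ) (hα : α ∈ Ioo (0:ℝ) 1) :
    ∫ t in Ioi (0:ℝ), t ^ (-1 - 2*α) *
      ((Ioo (0:ℝ) 1).indicator (fun s => (1 - s) ^ (α - 1)) t + (1 + t) ^ (α - 1) - 2) = 0 := by
  rw [setIntegral_congr_fun (g := powKernel α) measurableSet_Ioi fun t ht => by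
    rw [powKernel, indicator_Ioo_one_sub_rpow (sub_ne_zero.2 hα.2.ne) ht]]
  have hcover : AECover (volume.restrict (Ioi (0 : ℝ))) (𝓝[>] 0) Ioi :=
    aecover_Ioi_of_Ioi (tendsto_id.mono_left nhdsWithin_le_nhds)
  have hlim := (tendsto_powKernelPrimitive_nhdsGT_zero hα).neg.sub
    (tendsto_setIntegral_powKernelDefect_nhdsGT_zero hα)
  rw [neg_zero, sub_zero] at hlim
  refine hcover.integral_eq_of_tendsto _ (integrableOn_powKernel hα) (hlim.congr' ?_)
  filter_upwards [Ioo_mem_nhdsGT one_pos] with ε hε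
  rw [Measure.restrict_restrict_of_subset (Ioi_subset_Ioi hε.1.le),
    setIntegral_Ioi_powKernel hα hε.1 hε.2]
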